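/- For the path on 5 vertices and on 6 vertices, the d₂-transitivity equals 4: Tr_{d₂}(P₅) = Tr_{d₂}(P₆) = 4. -/

import Mathlib

open SimpleGraph

/-- `P : Fin k → Set V` is a d₂-transitive partition of size `k` of the graph `G`:
its parts are nonempty, every vertex lies in exactly one part, and for `i < j`
every vertex of `P j` is within graph distance 2 of some vertex of `P i`. -/
def IsD2TransPartition {V : Type*} (G : SimpleGraph V) {k : ℕ} (P : Fin k → Set V) : Prop :=
  (∀ i, (P i).Nonempty) ∧ (∀ v : V, ∃! i, v ∈ P i) ∧
  ∀ i j : Fin k, i < j → ∀ b ∈ P j, ∃ a ∈ P i, G.edist a b ≤ 2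

/-- The d₂-transitivity `Tr_{d₂}(G)`: the maximum size of a d₂-transitive partition. -/
noncomputable def Trd2 {V : Type*} (G : SimpleGraph V) : ℕ :=
  sSup {k : ℕ | ∃ P : Fin k → Set V, IsD2TransPartition G P}

/-! A d₂-transitive partition of size `k` is the same as a surjective colouring `f : V → Fin k`
in which every vertex `w` sees, within distance 2, every colour smaller than `f w`. Capping the
colours at `m - 1` merges the top classes, so the attainable sizes are downward closed and
`Tr_{d₂}(G) = m` as soon as `m` is attained and `m + 1` is not. On a path the distance is
`|a - b|`, and a surjective colouring of `n` vertices by `k` colours lists as a rearrangement of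
`0, …, k - 1` followed by `n - k` further colours; deciding the condition on these finitely many
lists rules out 5 colours on `P₅` and `P₆`, while explicit colourings attain 4. -/

theorem pathGraph_le_add_walk_length {n : ℕ} {a b : Fin n} (p : (pathGraph n).Walk a b) :
    (b : ℕ) ≤ a + p.length ∧ (a : ℕ) ≤ b + p.length := by
  induction p with
  | nil => simp
  | cons h _ ih =>
    rw [pathGraph_adj] at h
    rw [Walk.length_cons]
    omega

theorem pathGraph_edist_add_le {n : ℕ} (a d : ℕ) (h : a + d < n) :
    (pathGraph n).edist ⟨a, by omega⟩ ⟨a + d, h⟩ ≤ d := by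
  induction d with
  | zero => simp
  | succ d ih =>
    have hadj : (pathGraph n).Adj ⟨a + d, by omega⟩ ⟨a + (d + 1), h⟩ :=
      pathGraph_adj.2 (Or.inl rfl)
    calc (pathGraph n).edist ⟨a, _⟩ ⟨a + (d + 1), h⟩
        ≤ (pathGraph n).edist ⟨a, _⟩ ⟨a + d, _⟩ + (pathGraph n).edist ⟨a + d, _⟩ ⟨a + (d + 1), h⟩ :=
          SimpleGraph.edist_triangle
      _ ≤ d + 1 := add_le_add (ih (by omega)) (edist_eq_one_iff_adj.2 hadj).le
      _ = (d + 1 : ℕ) := by push_cast; rfl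

theorem pathGraph_edist_le_iff {n d : ℕ} {a b : Fin n} :
    (pathGraph n).edist a b ≤ d ↔ (b : ℕ) ≤ a + d ∧ (a : ℕ) ≤ b + d := by
  constructor
  · intro h
    obtain ⟨p, hp⟩ := exists_walk_of_edist_ne_top (ne_top_of_le_ne_top (ENat.natCast_ne_top d) h)
    have := pathGraph_le_add_walk_length p
    have : p.length ≤ d := by exact_mod_cast hp ▸ h
    omega
  · rintro ⟨hb, ha⟩
    wlog hab : (a : ℕ) ≤ b generalizing a b
    · rw [edist_comm]
      exact this ha hb (by omega)
    obtain ⟨a, ha'⟩ := a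
    obtain ⟨b, hb'⟩ := b
    obtain ⟨e, rfl⟩ := Nat.exists_eq_add_of_le hab
    exact (pathGraph_edist_add_le a e hb').trans (Nat.cast_le.2 (by simpa using hb))

section Coloring

variable {V : Type*} {G : SimpleGraph V} {k : ℕ}

def IsD2TransColoring (G : SimpleGraph V) (f : V → Fin k) : Prop :=
  Function.Surjective f ∧ ∀ v w, f v < f w → ∃ a, f a = f v ∧ G.edist a w ≤ 2

theorem exists_isD2TransPartition_iff :
    (∃ P : Fin k → Set V, IsD2TransPartition G P) ↔ ∃ f : V → Fin k, IsD2TransColoring G f := by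
  constructor
  · rintro ⟨P, hne, huniq, htrans⟩
    choose f hf hfu using huniq
    refine ⟨f, fun i => ?_, fun v w hvw => ?_⟩
    · obtain ⟨v, hv⟩ := hne i
      exact ⟨v, (hfu v i hv).symm⟩
    · obtain ⟨a, ha, hd⟩ := htrans (f v) (f w) hvw w (hf w)
      exact ⟨a, (hfu a (f v) ha).symm, hd⟩
  · rintro ⟨f, hsurj, htrans⟩
    refine ⟨fun i => f ⁻¹' {i}, fun i => hsurj i, fun v => ⟨f v, rfl, fun j hj => hj.symm⟩, ?_⟩
    rintro i j hij w rfl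
    obtain ⟨v, rfl⟩ := hsurj i
    exact htrans v w hij

theorem IsD2TransColoring.exists_of_le {f : V → Fin k} (hf : IsD2TransColoring G f) {m : ℕ}
    (hm : 0 < m) (hmk : m ≤ k) : ∃ g : V → Fin m, IsD2TransColoring G g := by
  refine ⟨fun v => ⟨min (f v) (m - 1), by omega⟩, fun i => ?_, fun v w hvw => ?_⟩
  · obtain ⟨v, hv⟩ := hf.1 ⟨i, by omega⟩
    exact ⟨v, Fin.ext (by simp only [hv]; omega)⟩
  · rw [Fin.mk_lt_mk] at hvw
    obtain ⟨a, ha, hd⟩ := hf.2 v w (by rw [Fin.lt_def]; omega)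
    exact ⟨a, by simp only [ha], hd⟩

theorem trd2_eq_of_exists_of_not_exists {m : ℕ} (h : ∃ f : V → Fin m, IsD2TransColoring G f)
    (h' : ¬∃ f : V → Fin (m + 1), IsD2TransColoring G f) : Trd2 G = m := by
  have hm : m ∈ {k : ℕ | ∃ P : Fin k → Set V, IsD2TransPartition G P} :=
    exists_isD2TransPartition_iff.2 h
  have hle : ∀ k ∈ {k : ℕ | ∃ P : Fin k → Set V, IsD2TransPartition G P}, k ≤ m := by
    rintro k hk
    by_contra! hmk
    obtain ⟨f, hf⟩ := exists_isD2TransPartition_iff.1 hk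
    exact h' (hf.exists_of_le m.succ_pos hmk)
  exact le_antisymm (csSup_le ⟨m, hm⟩ hle) (le_csSup ⟨m, hle⟩ hm)

end Coloring

def IsD2TransColorList (l : List ℕ) : Prop :=
  ∀ v < l.length, ∀ w < l.length, l.getD v 0 < l.getD w 0 →
    ∃ a < l.length, l.getD a 0 = l.getD v 0 ∧ w ≤ a + 2 ∧ a ≤ w + 2

instance : DecidablePred IsD2TransColorList := fun l => by
  unfold IsD2TransColorList; infer_instance

-- `permutations'` rather than `permutations`: the latter is not structurally recursive, so the
-- kernel cannot evaluate it in `decide`.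
def surjColorLists (n k : ℕ) : List (List ℕ) :=
  (List.replicate (n - k) (List.range k)).sections.flatMap fun r => (List.range k ++ r).permutations'

theorem mem_surjColorLists {n k : ℕ} {l : List ℕ} (hlen : l.length = n) (hlt : ∀ x ∈ l, x < k)
    (hsurj : ∀ c < k, c ∈ l) : l ∈ surjColorLists n k := by
  obtain ⟨l', hperm, hsub⟩ :=
    List.subperm_of_subset List.nodup_range (fun c hc => hsurj c (List.mem_range.1 hc))
  obtain ⟨r, hr⟩ := hsub.exists_perm_append
  have hl : l.Perm (List.range k ++ r) := hr.trans (hperm.append_right r)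
  refine List.mem_flatMap.2 ⟨r, List.mem_sections.2 ?_, List.mem_permutations'.2 hl⟩
  have hrlen : r.length = n - k := by
    have := hl.length_eq
    simp only [List.length_append, List.length_range] at this
    omega
  rw [List.forall₂_iff_get]
  refine ⟨by simpa using hrlen, fun i h₁ h₂ => ?_⟩
  simpa using hlt _ (hl.symm.subset (List.mem_append_right _ (List.get_mem r ⟨i, h₁⟩)))

theorem isD2TransColoring_pathGraph_iff {n k : ℕ} (f : Fin n → Fin k) :
    IsD2TransColoring (pathGraph n) f ↔ Function.Surjective f ∧
      ∀ v w, f v < f w → ∃ a, f a = f v ∧ (w : ℕ) ≤ a + 2 ∧ (a : ℕ) ≤ w + 2 := by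
  have h2 := fun a b : Fin n => pathGraph_edist_le_iff (a := a) (b := b) (d := 2)
  simp only [Nat.cast_ofNat] at h2
  simp only [IsD2TransColoring, h2]

theorem IsD2TransColoring.isD2TransColorList_ofFn {n k : ℕ} {f : Fin n → Fin k}
    (hf : IsD2TransColoring (pathGraph n) f) : IsD2TransColorList (List.ofFn fun i => (f i : ℕ)) := by
  have hget : ∀ v (hv : v < n), (List.ofFn fun i => (f i : ℕ)).getD v 0 = f ⟨v, hv⟩ := by
    intro v hv
    simp [List.getD_eq_getElem?_getD, hv]
  intro v hv w hw hvw
  rw [List.length_ofFn] at hv hw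
  rw [hget v hv, hget w hw] at hvw
  obtain ⟨a, ha, hd⟩ := ((isD2TransColoring_pathGraph_iff f).1 hf).2 ⟨v, hv⟩ ⟨w, hw⟩ hvw
  exact ⟨a, by simp, by rw [hget a a.isLt, hget v hv, ha], hd⟩

theorem not_exists_isD2TransColoring_pathGraph {n k : ℕ}
    (h : ∀ l ∈ surjColorLists n k, ¬IsD2TransColorList l) :
    ¬∃ f : Fin n → Fin k, IsD2TransColoring (pathGraph n) f := by
  rintro ⟨f, hf⟩
  refine h _ (mem_surjColorLists (List.length_ofFn) (fun x hx => ?_) fun c hc => ?_)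
    hf.isD2TransColorList_ofFn
  · obtain ⟨i, rfl⟩ := List.mem_ofFn.1 hx
    exact (f i).isLt
  · obtain ⟨v, hv⟩ := hf.1 ⟨c, hc⟩
    exact List.mem_ofFn.2 ⟨v, by simp [hv]⟩

theorem stmt_18 : Trd2 (pathGraph 5) = 4 ∧ Trd2 (pathGraph 6) = 4 := by
  refine ⟨trd2_eq_of_exists_of_not_exists ?_ ?_, trd2_eq_of_exists_of_not_exists ?_ ?_⟩
  · exact ⟨![0, 1, 3, 2, 0], (isD2TransColoring_pathGraph_iff _).2 (by decide)⟩
  · exact not_exists_isD2TransColoring_pathGraph (by decide +kernel)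
  · exact ⟨![0, 1, 2, 3, 1, 0], (isD2TransColoring_pathGraph_iff _).2 (by decide)⟩
  · exact not_exists_isD2TransColoring_pathGraph (by decide +kernel)
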